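/- arXiv:2209.11900 — 9 statements merged into one kernel-verified Lean document; each statement's English description precedes it below -/
import Mathlib

section
/- Let b : Ĝ → ℚ satisfy the gnat condition at the junior element g. Then the distinguished point p_b of b satisfies the commutation relations, i.e. p_b(ρ·χ_j, j′)·p_b(ρ, j) = p_b(ρ·χ_{j′}, j)·p_b(ρ, j′) for all ρ ∈ Ĝ and all j, j′ ∈ {1,…,n}; in other words, p_b is a McKay-quiver point. -/
open Complex

/-- `b : Ĝ → ℚ` satisfies the gnat condition at a junior element with data `a j / d`:
for all `ρ` and `j`, the number `b ρ + a j / d - b (ρ * χ j)` is a non-negative integer. -/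
def GnatCond {G : Type*} [CommGroup G] {n : ℕ} (χ : Fin n → (G →* ℂˣ))
    (d : ℕ) (a : Fin n → ℕ) (b : (G →* ℂˣ) → ℚ) : Prop :=
  ∀ (ρ : G →* ℂˣ) (j : Fin n), ∃ z : ℕ,
    b ρ + (a j : ℚ) / (d : ℚ) - b (ρ * χ j) = (z : ℚ)

/-- The distinguished point of `b`: `p_b (ρ, j) = 1` if `b ρ + a j / d = b (ρ * χ j)`,
and `0` otherwise. -/
def distPt {G : Type*} [CommGroup G] {n : ℕ} (χ : Fin n → (G →* ℂˣ))
    (d : ℕ) (a : Fin n → ℕ) (b : (G →* ℂˣ) → ℚ) : (G →* ℂˣ) → Fin n → ℂ :=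
  fun ρ j => if b ρ + (a j : ℚ) / (d : ℚ) = b (ρ * χ j) then 1 else 0

/-!
Along a path `ρ → ρ χ_j → ρ χ_j χ_{j'}` the gnat condition says that `b` grows by at most
`a_j / d` and then by at most `a_{j'} / d`. Both arrows lie in the support of `p_b` exactly when
the total growth `a_j / d + a_{j'} / d` is attained, and since `ρ χ_j χ_{j'} = ρ χ_{j'} χ_j` this
condition does not depend on the order of `j` and `j'`.
-/

namespace GnatCond

variable {G : Type*} [CommGroup G] {n : ℕ} {χ : Fin n → (G →* ℂˣ)} {d : ℕ}
  {a : Fin n → ℕ} {b : (G →* ℂˣ) → ℚ}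

theorem sub_nonneg (hb : GnatCond χ d a b) (ρ : G →* ℂˣ) (j : Fin n) :
    0 ≤ b ρ + (a j : ℚ) / d - b (ρ * χ j) := by
  obtain ⟨z, hz⟩ := hb ρ j
  exact hz ▸ z.cast_nonneg

theorem eq_add_add_iff (hb : GnatCond χ d a b) (ρ : G →* ℂˣ) (j j' : Fin n) :
    b (ρ * χ j * χ j') = b ρ + (a j : ℚ) / d + (a j' : ℚ) / d ↔
      b ρ + (a j : ℚ) / d = b (ρ * χ j) ∧
        b (ρ * χ j) + (a j' : ℚ) / d = b (ρ * χ j * χ j') := by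
  have h₁ := hb.sub_nonneg ρ j
  have h₂ := hb.sub_nonneg (ρ * χ j) j'
  constructor
  · intro h
    constructor <;> linarith
  · rintro ⟨e₁, e₂⟩
    linarith

theorem distPt_mul_distPt (hb : GnatCond χ d a b) (ρ : G →* ℂˣ) (j j' : Fin n) :
    distPt χ d a b (ρ * χ j) j' * distPt χ d a b ρ j =
      if b (ρ * χ j * χ j') = b ρ + (a j : ℚ) / d + (a j' : ℚ) / d then 1 else 0 := by
  simp only [distPt, ite_zero_mul_ite_zero, mul_one, hb.eq_add_add_iff, and_comm]

end GnatCond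

theorem stmt0_general {G : Type*} [CommGroup G] {n : ℕ}
    (χ : Fin n → (G →* ℂˣ))
    (d : ℕ)
    (a : Fin n → ℕ)
    (b : (G →* ℂˣ) → ℚ) (hb : GnatCond χ d a b) :
    ∀ (ρ : G →* ℂˣ) (j j' : Fin n),
      distPt χ d a b (ρ * χ j) j' * distPt χ d a b ρ j =
      distPt χ d a b (ρ * χ j') j * distPt χ d a b ρ j' := by
  intro ρ j j'
  rw [hb.distPt_mul_distPt, hb.distPt_mul_distPt, mul_right_comm ρ (χ j), add_right_comm]

/-- The distinguished point of a gnat-condition family satisfies the McKay-quiver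
commutation relations. -/
theorem stmt0 {G : Type*} [CommGroup G] [Fintype G] {n : ℕ} (hn : 1 ≤ n)
    (χ : Fin n → (G →* ℂˣ))
    (hgen : Subgroup.closure (Set.range χ) = (⊤ : Subgroup (G →* ℂˣ)))
    (hprod : ∏ j, χ j = 1)
    (g : G) (d : ℕ) (hd : orderOf g = d)
    (a : Fin n → ℕ) (ha : ∀ j, a j < d)
    (hchi : ∀ j, ((χ j g : ℂˣ) : ℂ) =
      Complex.exp (2 * (Real.pi : ℂ) * Complex.I * (a j : ℂ) / (d : ℂ)))
    (hjunior : ∑ j, a j = d)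
    (b : (G →* ℂˣ) → ℚ) (hb : GnatCond χ d a b) :
    ∀ (ρ : G →* ℂˣ) (j j' : Fin n),
      distPt χ d a b (ρ * χ j) j' * distPt χ d a b ρ j =
      distPt χ d a b (ρ * χ j') j * distPt χ d a b ρ j' :=
  stmt0_general χ d a b hb
end

section
/- Let b : Ĝ → ℚ satisfy the gnat condition at the junior element g, with distinguished point p_b. If S ⊆ Ĝ is a nonempty proper p_b-closed subset, then for every ρ ∈ Ĝ∖S and every j ∈ {1,…,n} with ρ·χ_j ∈ S one has p_b(ρ, j) = 1, i.e. b(ρ) + a_j/d = b(ρ·χ_j). -/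
open Complex

/-- `S ⊆ Ĝ` is `p`-closed: for every `ρ ∈ S` and every `j`, `p ρ j ≠ 0` implies
`ρ * χ j ∈ S`. -/
def PClosed {G : Type*} [CommGroup G] {n : ℕ} (χ : Fin n → (G →* ℂˣ))
    (p : (G →* ℂˣ) → Fin n → ℂ) (S : Set (G →* ℂˣ)) : Prop :=
  ∀ ρ ∈ S, ∀ j : Fin n, p ρ j ≠ 0 → ρ * χ j ∈ S

/-! Call `b ρ + a_j / d - b (ρ χ_j)` the defect of the arrow `ρ → ρ χ_j`. The gnat condition
says it is a natural number, so the defects along any path add up to a natural number. Following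
the arrow `ρ → ρ χ_j` by the remaining characters gives a closed cycle (as `∏ χ_j = 1`) whose
defects sum to `∑ a_j / d = 1`, so the first arrow has defect `0` or `1`. If it were `1`, every
later arrow would have defect `0`, i.e. be an arrow of `p_b`; the path would then stay in `S` and
lead from `ρ χ_j ∈ S` back to `ρ ∉ S`. -/

namespace GnatCond

variable {G : Type*} [CommGroup G] {n : ℕ} {χ : Fin n → (G →* ℂˣ)} {d : ℕ} {a : Fin n → ℕ}
  {b : (G →* ℂˣ) → ℚ}

theorem exists_nat_defect_path (hb : GnatCond χ d a b) (l : List (Fin n))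
    (τ : G →* ℂˣ) :
    ∃ z : ℕ, b τ + ((l.map a).sum : ℚ) / d - b (τ * (l.map χ).prod) = z := by
  induction l generalizing τ with
  | nil => exact ⟨0, by simp [mul_one (M := G →* ℂˣ)]⟩
  | cons k l ih =>
    obtain ⟨z, hz⟩ := hb τ k
    obtain ⟨w, hw⟩ := ih (τ * χ k)
    refine ⟨z + w, ?_⟩
    simp only [List.map_cons, List.prod_cons, List.sum_cons, ← mul_assoc (G := G →* ℂˣ)]
      at hw ⊢
    rw [Nat.cast_add, Nat.cast_add, ← hz, ← hw]
    ring

theorem mul_prod_mem_of_eq (hb : GnatCond χ d a b) {S : Set (G →* ℂˣ)}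
    (hS : PClosed χ (distPt χ d a b) S) (l : List (Fin n)) {τ : G →* ℂˣ} (hτ : τ ∈ S)
    (heq : b τ + ((l.map a).sum : ℚ) / d = b (τ * (l.map χ).prod)) :
    τ * (l.map χ).prod ∈ S := by
  induction l generalizing τ with
  | nil => simpa [mul_one (M := G →* ℂˣ)] using hτ
  | cons k l ih =>
    obtain ⟨z, hz⟩ := hb τ k
    obtain ⟨w, hw⟩ := hb.exists_nat_defect_path l (τ * χ k)
    simp only [List.map_cons, List.prod_cons, List.sum_cons, ← mul_assoc (G := G →* ℂˣ)]
      at heq ⊢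
    have hzw : z + w = 0 := by
      rw [Nat.cast_add, add_div] at heq
      exact_mod_cast (by linarith : (z : ℚ) + w = 0)
    obtain ⟨hz0, hw0⟩ := Nat.add_eq_zero_iff.1 hzw
    rw [hz0, Nat.cast_zero] at hz
    rw [hw0, Nat.cast_zero] at hw
    have hstep : τ * χ k ∈ S :=
      hS τ hτ k (by simp [distPt, show b τ + a k / d = b (τ * χ k) by linarith])
    exact ih hstep (by linarith)

end GnatCond

theorem stmt1_general {G : Type*} [CommGroup G] {n : ℕ}
    (χ : Fin n → (G →* ℂˣ))
    (hprod : ∏ j, χ j = 1)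
    (d : ℕ)
    (a : Fin n → ℕ)
    (hjunior : ∑ j, a j = d)
    (b : (G →* ℂˣ) → ℚ) (hb : GnatCond χ d a b)
    (S : Set (G →* ℂˣ))
    (hSclosed : PClosed χ (distPt χ d a b) S) :
    ∀ ρ ∉ S, ∀ j : Fin n, ρ * χ j ∈ S →
      b ρ + (a j : ℚ) / (d : ℚ) = b (ρ * χ j) := by
  intro ρ hρ j hin
  set l := (List.finRange n).erase j
  have hj : j ∈ List.finRange n := List.mem_finRange j
  have hcycle : ρ * χ j * (l.map χ).prod = ρ := by
    rw [mul_assoc (G := G →* ℂˣ), List.prod_map_erase χ hj, ← Fin.prod_univ_def, hprod,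
      mul_one (M := G →* ℂˣ)]
  have hweight : a j + (l.map a).sum = d :=
    (List.sum_map_erase a hj).trans ((Fin.sum_univ_def a).symm.trans hjunior)
  obtain ⟨z, hz⟩ := hb ρ j
  obtain ⟨w, hw⟩ := hb.exists_nat_defect_path l (ρ * χ j)
  rw [hcycle] at hw
  have hzw : (z : ℚ) + w ≤ 1 := calc
    (z : ℚ) + w = (a j : ℚ) / d + ((l.map a).sum : ℚ) / d := by linarith
    _ = d / d := by rw [← add_div, ← Nat.cast_add, hweight]
    _ ≤ 1 := div_self_le_one _
  have hzw' : z + w ≤ 1 := by exact_mod_cast hzw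
  obtain hz0 | hw0 : z = 0 ∨ w = 0 := by omega
  · rw [hz0, Nat.cast_zero] at hz
    linarith
  · rw [hw0, Nat.cast_zero] at hw
    exact absurd (hcycle ▸ hb.mul_prod_mem_of_eq hSclosed l hin (by rw [hcycle]; linarith)) hρ

/-- If `S` is a nonempty proper `p_b`-closed subset, then every arrow entering `S`
from outside is nonzero in the distinguished point. -/
theorem stmt1 {G : Type*} [CommGroup G] [Fintype G] {n : ℕ} (hn : 1 ≤ n)
    (χ : Fin n → (G →* ℂˣ))
    (hgen : Subgroup.closure (Set.range χ) = (⊤ : Subgroup (G →* ℂˣ)))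
    (hprod : ∏ j, χ j = 1)
    (g : G) (d : ℕ) (hd : orderOf g = d)
    (a : Fin n → ℕ) (ha : ∀ j, a j < d)
    (hchi : ∀ j, ((χ j g : ℂˣ) : ℂ) =
      Complex.exp (2 * (Real.pi : ℂ) * Complex.I * (a j : ℂ) / (d : ℂ)))
    (hjunior : ∑ j, a j = d)
    (b : (G →* ℂˣ) → ℚ) (hb : GnatCond χ d a b)
    (S : Set (G →* ℂˣ)) (hSne : S.Nonempty) (hSproper : S ≠ Set.univ)
    (hSclosed : PClosed χ (distPt χ d a b) S) :
    ∀ ρ ∉ S, ∀ j : Fin n, ρ * χ j ∈ S →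
      b ρ + (a j : ℚ) / (d : ℚ) = b (ρ * χ j) :=
  stmt1_general χ hprod d a hjunior b hb S hSclosed
end

section
/- Let b : Ĝ → ℚ satisfy the gnat condition at the junior element g, with distinguished point p_b. Then p_b is indecomposable: there is no nonempty proper subset S ⊆ Ĝ such that both S and its complement Ĝ∖S are p_b-closed. -/
open Complex

/-!
Give the step from `ρ` to `ρ * χ j` the weight `b ρ + a j / d - b (ρ * χ j)`, a non-negative
integer by the gnat condition; `p_b` records the steps of weight zero. Starting at `ρ`, the step
along `χ j` followed by the steps along all other `χ k` returns to `ρ` because `∏ χ k = 1`, and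
the weights of this cycle add up to `∑ a k / d = 1`. Hence at most one of its steps has positive
weight: either the first step is of weight zero, or all later ones are. If `S` and its complement
are both `p_b`-closed, then in either case `ρ ∈ S` forces `ρ * χ j ∈ S`, so the characters `χ j`,
which generate `Ĝ`, stabilise `S`, and a nonempty `S` is everything.
-/

section StepClosed

open scoped Pointwise

variable {H ι : Type*} [CommGroup H] {χ : ι → H} {b : H → ℚ} {c : ι → ℚ}

variable (χ b c) in
def StepClosed (S : Set H) : Prop :=
  ∀ ρ ∈ S, ∀ j, b ρ + c j = b (ρ * χ j) → ρ * χ j ∈ S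

lemma le_add_sum_of_forall_le (hstep : ∀ ρ j, b (ρ * χ j) ≤ b ρ + c j) (ρ : H) (L : List ι) :
    b (ρ * (L.map χ).prod) ≤ b ρ + (L.map c).sum := by
  induction L generalizing ρ with
  | nil => simp
  | cons j L ih =>
    simp only [List.map_cons, List.prod_cons, List.sum_cons, ← mul_assoc]
    linarith [hstep ρ j, ih (ρ * χ j)]

lemma StepClosed.mul_prod_mem {S : Set H} (hS : StepClosed χ b c S)
    (hstep : ∀ ρ j, b (ρ * χ j) ≤ b ρ + c j) {ρ : H} (hρ : ρ ∈ S) {L : List ι}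
    (hL : b (ρ * (L.map χ).prod) = b ρ + (L.map c).sum) : ρ * (L.map χ).prod ∈ S := by
  induction L generalizing ρ with
  | nil => simpa using hρ
  | cons j L ih =>
    simp only [List.map_cons, List.prod_cons, List.sum_cons, ← mul_assoc] at hL ⊢
    have hrest := le_add_sum_of_forall_le hstep (ρ * χ j) L
    exact ih (hS ρ hρ j (by linarith [hstep ρ j])) (by linarith [hstep ρ j])

variable [Fintype ι]

lemma StepClosed.mul_mem (hint : ∀ ρ j, ∃ z : ℕ, b ρ + c j - b (ρ * χ j) = z)
    (hprod : ∏ j, χ j = 1) (hsum : ∑ j, c j ≤ 1) {S : Set H} (hS : StepClosed χ b c S)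
    (hSc : StepClosed χ b c Sᶜ) {ρ : H} (hρ : ρ ∈ S) (j : ι) : ρ * χ j ∈ S := by
  classical
  have hstep : ∀ ρ j, b (ρ * χ j) ≤ b ρ + c j := fun ρ j => by
    obtain ⟨z, hz⟩ := hint ρ j
    linarith [z.cast_nonneg (α := ℚ)]
  set L := (Finset.univ.erase j).toList
  have hprodL : (L.map χ).prod = (χ j)⁻¹ := by
    refine (inv_eq_of_mul_eq_one_right ?_).symm
    rw [Finset.prod_map_toList, Finset.mul_prod_erase _ _ (Finset.mem_univ j), hprod]
  have hsumL : (L.map c).sum = ∑ i, c i - c j := by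
    rw [Finset.sum_map_toList, ← Finset.add_sum_erase _ _ (Finset.mem_univ j)]
    ring
  obtain ⟨z, hz⟩ := hint ρ j
  rcases z.eq_zero_or_pos with hzero | hpos
  · exact hS ρ hρ j (by rw [hzero, Nat.cast_zero] at hz; linarith)
  · by_contra hout
    have hone : (1 : ℚ) ≤ z := by exact_mod_cast hpos
    -- the rest of the cycle back to `ρ` has total weight `∑ c - z ≤ 0`
    have hback : b (ρ * χ j * (L.map χ).prod) = b (ρ * χ j) + (L.map c).sum := by
      have hle := le_add_sum_of_forall_le hstep (ρ * χ j) L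
      rw [hprodL, mul_inv_cancel_right] at hle ⊢
      linarith
    have hret := hSc.mul_prod_mem hstep hout hback
    rw [hprodL, mul_inv_cancel_right] at hret
    exact hret hρ

lemma StepClosed.eq_univ (hint : ∀ ρ j, ∃ z : ℕ, b ρ + c j - b (ρ * χ j) = z)
    (hprod : ∏ j, χ j = 1) (hsum : ∑ j, c j ≤ 1)
    (hgen : Subgroup.closure (Set.range χ) = ⊤) {S : Set H} (hne : S.Nonempty)
    (hS : StepClosed χ b c S) (hSc : StepClosed χ b c Sᶜ) : S = Set.univ := by
  have hstab : Subgroup.closure (Set.range χ) ≤ MulAction.stabilizer H S := by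
    rw [Subgroup.closure_le]
    rintro _ ⟨j, rfl⟩
    rw [SetLike.mem_coe, MulAction.mem_stabilizer_set]
    intro ρ
    rw [smul_eq_mul, mul_comm]
    refine ⟨fun h => ?_, fun h => hS.mul_mem hint hprod hsum hSc h j⟩
    by_contra hρ
    exact hSc.mul_mem hint hprod hsum (by rwa [compl_compl]) hρ j h
  obtain ⟨ρ₀, hρ₀⟩ := hne
  refine Set.eq_univ_of_forall fun τ => ?_
  have hmem : τ * ρ₀⁻¹ ∈ MulAction.stabilizer H S := hstab (hgen ▸ Subgroup.mem_top _)
  rw [MulAction.mem_stabilizer_set] at hmem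
  simpa using (hmem ρ₀).2 hρ₀

end StepClosed

lemma PClosed.stepClosed_distPt {G : Type*} [CommGroup G] {n : ℕ} {χ : Fin n → (G →* ℂˣ)}
    {d : ℕ} {a : Fin n → ℕ} {b : (G →* ℂˣ) → ℚ} {S : Set (G →* ℂˣ)}
    (hS : PClosed χ (distPt χ d a b) S) : StepClosed χ b (fun j => (a j : ℚ) / d) S :=
  fun ρ hρ j h => hS ρ hρ j (by simp [distPt, h])

theorem stmt2_general {G : Type*} [CommGroup G] {n : ℕ}
    (χ : Fin n → (G →* ℂˣ))
    (hgen : Subgroup.closure (Set.range χ) = (⊤ : Subgroup (G →* ℂˣ)))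
    (hprod : ∏ j, χ j = 1)
    (d : ℕ)
    (a : Fin n → ℕ)
    (hjunior : ∑ j, a j = d)
    (b : (G →* ℂˣ) → ℚ) (hb : GnatCond χ d a b) :
    ¬ ∃ S : Set (G →* ℂˣ), S.Nonempty ∧ S ≠ Set.univ ∧
      PClosed χ (distPt χ d a b) S ∧ PClosed χ (distPt χ d a b) Sᶜ := by
  rintro ⟨S, hne, hS_ne_univ, hS, hSc⟩
  have hsum : ∑ j, (a j : ℚ) / d ≤ 1 := by
    rw [← Finset.sum_div, ← Nat.cast_sum, hjunior]
    exact div_self_le_one _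
  exact hS_ne_univ <|
    hS.stepClosed_distPt.eq_univ (fun ρ j => hb ρ j) hprod hsum hgen hne hSc.stepClosed_distPt

/-- The distinguished point of a gnat-condition family at a junior element is
indecomposable. -/
theorem stmt2 {G : Type*} [CommGroup G] [Fintype G] {n : ℕ} (hn : 1 ≤ n)
    (χ : Fin n → (G →* ℂˣ))
    (hgen : Subgroup.closure (Set.range χ) = (⊤ : Subgroup (G →* ℂˣ)))
    (hprod : ∏ j, χ j = 1)
    (g : G) (d : ℕ) (hd : orderOf g = d)
    (a : Fin n → ℕ) (ha : ∀ j, a j < d)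
    (hchi : ∀ j, ((χ j g : ℂˣ) : ℂ) =
      Complex.exp (2 * (Real.pi : ℂ) * Complex.I * (a j : ℂ) / (d : ℂ)))
    (hjunior : ∑ j, a j = d)
    (b : (G →* ℂˣ) → ℚ) (hb : GnatCond χ d a b) :
    ¬ ∃ S : Set (G →* ℂˣ), S.Nonempty ∧ S ≠ Set.univ ∧
      PClosed χ (distPt χ d a b) S ∧ PClosed χ (distPt χ d a b) Sᶜ :=
  stmt2_general χ hgen hprod d a hjunior b hb
end

section
/- Let b : Ĝ → ℚ satisfy the gnat condition at the junior element g, with distinguished point p_b, and let S ⊆ Ĝ be a nonempty proper p_b-closed subset containing the trivial character 1. Define b′ : Ĝ → ℚ by b′(ρ) = b(ρ) for ρ ∈ S and b′(ρ) = b(ρ) + 1 for ρ ∉ S. Then b′ again satisfies the gnat condition at g, and the complement Ĝ∖S is p_{b′}-closed, where p_{b′} is the distinguished point of b′. -/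
open Complex

/-!
Raising `b` by `1` outside `S` lowers the gap `b ρ + a j / d - b (ρ * χ j)` by `1` exactly on the
steps leaving `S`; there the gap is a positive integer, since a zero gap would keep the step inside
the `p_b`-closed set `S`. On the steps entering `S` the new gap is the old one plus `1`, hence
never zero, so no step of `p_{b'}` leaves `Sᶜ`.
-/

section

variable {G : Type*} [CommGroup G] {n : ℕ} {χ : Fin n → (G →* ℂˣ)} {d : ℕ} {a : Fin n → ℕ}
  {b b' : (G →* ℂˣ) → ℚ} {S : Set (G →* ℂˣ)}

lemma distPt_ne_zero_iff {ρ : G →* ℂˣ} {j : Fin n} :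
    distPt χ d a b ρ j ≠ 0 ↔ b ρ + (a j : ℚ) / d = b (ρ * χ j) := by
  simp [distPt]

lemma PClosed.mul_mem_of_eq (hS : PClosed χ (distPt χ d a b) S) {ρ : G →* ℂˣ} (hρ : ρ ∈ S)
    {j : Fin n} (h : b ρ + (a j : ℚ) / d = b (ρ * χ j)) : ρ * χ j ∈ S :=
  hS ρ hρ j (distPt_ne_zero_iff.mpr h)

lemma GnatCond.add_one_outside (hb : GnatCond χ d a b) (hS : PClosed χ (distPt χ d a b) S)
    (hin : ∀ ρ ∈ S, b' ρ = b ρ) (hout : ∀ ρ ∉ S, b' ρ = b ρ + 1) :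
    GnatCond χ d a b' := by
  intro ρ j
  obtain ⟨z, hz⟩ := hb ρ j
  by_cases hρ : ρ ∈ S <;> by_cases hρχ : ρ * χ j ∈ S
  · exact ⟨z, by rw [hin ρ hρ, hin _ hρχ, hz]⟩
  · obtain ⟨w, rfl⟩ : ∃ w, z = w + 1 := by
      refine Nat.exists_eq_succ_of_ne_zero fun hz0 => hρχ (hS.mul_mem_of_eq hρ ?_)
      rw [hz0, Nat.cast_zero] at hz
      linarith
    refine ⟨w, ?_⟩
    rw [hin ρ hρ, hout _ hρχ]
    push_cast at hz
    linarith
  · refine ⟨z + 1, ?_⟩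
    rw [hout ρ hρ, hin _ hρχ]
    push_cast
    linarith
  · exact ⟨z, by rw [hout ρ hρ, hout _ hρχ, ← hz]; ring⟩

lemma GnatCond.pClosed_compl_add_one_outside (hb : GnatCond χ d a b) (hin : ∀ ρ ∈ S, b' ρ = b ρ)
    (hout : ∀ ρ ∉ S, b' ρ = b ρ + 1) : PClosed χ (distPt χ d a b') Sᶜ := by
  intro ρ hρ j hp hρχ
  rw [distPt_ne_zero_iff, hout ρ hρ, hin _ hρχ] at hp
  obtain ⟨z, hz⟩ := hb ρ j
  have hz_nonneg : (0 : ℚ) ≤ z := Nat.cast_nonneg z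
  linarith

end

theorem stmt3_general {G : Type*} [CommGroup G] {n : ℕ}
    (χ : Fin n → (G →* ℂˣ))
    (d : ℕ)
    (a : Fin n → ℕ)
    (b : (G →* ℂˣ) → ℚ) (hb : GnatCond χ d a b)
    (S : Set (G →* ℂˣ))
    (hSclosed : PClosed χ (distPt χ d a b) S)
    (b' : (G →* ℂˣ) → ℚ)
    (hb'in : ∀ ρ ∈ S, b' ρ = b ρ)
    (hb'out : ∀ ρ ∉ S, b' ρ = b ρ + 1) :
    GnatCond χ d a b' ∧ PClosed χ (distPt χ d a b') Sᶜ :=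
  ⟨hb.add_one_outside hSclosed hb'in hb'out, hb.pClosed_compl_add_one_outside hb'in hb'out⟩

/-- Shifting the coefficients of a gnat family by `+1` outside a nonempty proper
`p_b`-closed subset `S` containing the trivial character again yields a gnat family,
for which the complement of `S` is closed. -/
theorem stmt3 {G : Type*} [CommGroup G] [Fintype G] {n : ℕ} (hn : 1 ≤ n)
    (χ : Fin n → (G →* ℂˣ))
    (hgen : Subgroup.closure (Set.range χ) = (⊤ : Subgroup (G →* ℂˣ)))
    (hprod : ∏ j, χ j = 1)
    (g : G) (d : ℕ) (hd : orderOf g = d)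
    (a : Fin n → ℕ) (ha : ∀ j, a j < d)
    (hchi : ∀ j, ((χ j g : ℂˣ) : ℂ) =
      Complex.exp (2 * (Real.pi : ℂ) * Complex.I * (a j : ℂ) / (d : ℂ)))
    (hjunior : ∑ j, a j = d)
    (b : (G →* ℂˣ) → ℚ) (hb : GnatCond χ d a b)
    (S : Set (G →* ℂˣ)) (hSne : S.Nonempty) (hSproper : S ≠ Set.univ)
    (hSclosed : PClosed χ (distPt χ d a b) S)
    (h1S : (1 : G →* ℂˣ) ∈ S)
    (b' : (G →* ℂˣ) → ℚ)
    (hb'in : ∀ ρ ∈ S, b' ρ = b ρ)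
    (hb'out : ∀ ρ ∉ S, b' ρ = b ρ + 1) :
    GnatCond χ d a b' ∧ PClosed χ (distPt χ d a b') Sᶜ :=
  stmt3_general χ d a b hb S hSclosed b' hb'in hb'out
end

section
/- Let p be a McKay-quiver point. The dimension of the ℂ-vector space of ℂ-linear endomorphisms f of ℂ^Ĝ that commute with all the operators X_1, …, X_n and with the G-action equals the number of connected components of the support graph of p. -/
/-!
The characters `ρ ↦ ρ g` separate the points of `Ĝ`, so an endomorphism commuting with the
`G`-action is diagonal in the basis `e_ρ`, i.e. multiplication by some `c : Ĝ → ℂ`. Multiplication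
by `c` commutes with `X_j` exactly when `c ρ = c (ρ * χ j)` whenever `p ρ j ≠ 0`, that is, when `c`
is constant along the edges of the support graph. Hence the commutant is the space of functions
on the connected components.
-/

/-- A McKay-quiver point. -/
def IsMcKayPt {G : Type*} [CommGroup G] {n : ℕ} (χ : Fin n → (G →* ℂˣ))
    (p : (G →* ℂˣ) → Fin n → ℂ) : Prop :=
  ∀ (ρ : G →* ℂˣ) (j j' : Fin n),
    p (ρ * χ j) j' * p ρ j = p (ρ * χ j') j * p ρ j'

/-- The operator `X_j` on `ℂ^Ĝ` associated to `p`, determined by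
`X_j (e_ρ) = p ρ j • e_{ρ·χ_j}`. -/
noncomputable def Xop {G : Type*} [CommGroup G] {n : ℕ} (χ : Fin n → (G →* ℂˣ))
    (p : (G →* ℂˣ) → Fin n → ℂ) (j : Fin n) :
    ((G →* ℂˣ) → ℂ) →ₗ[ℂ] ((G →* ℂˣ) → ℂ) where
  toFun v := fun σ => p (σ * (χ j)⁻¹) j * v (σ * (χ j)⁻¹)
  map_add' u v := by funext σ; simp [mul_add]
  map_smul' c v := by funext σ; simp [smul_eq_mul]; ring

/-- The `G`-action operator on `ℂ^Ĝ`: `g • e_ρ = ρ(g) • e_ρ`. -/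
noncomputable def Dop {G : Type*} [CommGroup G] (g : G) :
    ((G →* ℂˣ) → ℂ) →ₗ[ℂ] ((G →* ℂˣ) → ℂ) where
  toFun v := fun ρ => ((ρ g : ℂˣ) : ℂ) * v ρ
  map_add' u v := by funext ρ; simp [mul_add]
  map_smul' c v := by funext ρ; simp [smul_eq_mul]; ring

/-- The space of `ℂ`-linear endomorphisms of `ℂ^Ĝ` commuting with all `X_j` and
with the `G`-action. -/
noncomputable def commutant {G : Type*} [CommGroup G] {n : ℕ}
    (χ : Fin n → (G →* ℂˣ)) (p : (G →* ℂˣ) → Fin n → ℂ) :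
    Submodule ℂ (((G →* ℂˣ) → ℂ) →ₗ[ℂ] ((G →* ℂˣ) → ℂ)) where
  carrier := {f | (∀ j : Fin n, f ∘ₗ Xop χ p j = Xop χ p j ∘ₗ f) ∧
    (∀ g : G, f ∘ₗ Dop g = Dop g ∘ₗ f)}
  add_mem' := by
    rintro f f' ⟨hf1, hf2⟩ ⟨hf'1, hf'2⟩
    constructor
    · intro j
      simp [LinearMap.add_comp, LinearMap.comp_add, hf1 j, hf'1 j]
    · intro g
      simp [LinearMap.add_comp, LinearMap.comp_add, hf2 g, hf'2 g]
  zero_mem' := by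
    constructor <;> intro _ <;>
      simp [LinearMap.zero_comp, LinearMap.comp_zero]
  smul_mem' := by
    rintro c f ⟨h1, h2⟩
    constructor
    · intro j
      simp [LinearMap.smul_comp, LinearMap.comp_smul, h1 j]
    · intro g
      simp [LinearMap.smul_comp, LinearMap.comp_smul, h2 g]

/-- The support graph of `p`: vertices `Ĝ`, an edge joining `ρ` and `ρ·χ_j`
whenever `p ρ j ≠ 0`. -/
def supportGraph {G : Type*} [CommGroup G] {n : ℕ} (χ : Fin n → (G →* ℂˣ))
    (p : (G →* ℂˣ) → Fin n → ℂ) : SimpleGraph (G →* ℂˣ) :=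
  SimpleGraph.fromRel (fun ρ σ => ∃ j : Fin n, p ρ j ≠ 0 ∧ σ = ρ * χ j)

open SimpleGraph

namespace SimpleGraph

variable {V : Type*} (Γ : SimpleGraph V)

theorem exists_comp_connectedComponentMk_of_adj {β : Type*} {c : V → β}
    (hc : ∀ u v, Γ.Adj u v → c u = c v) :
    ∃ d : Γ.ConnectedComponent → β, c = d ∘ Γ.connectedComponentMk := by
  have walk_const : ∀ u v (w : Γ.Walk u v), c u = c v := by
    intro u v w
    induction w with
    | nil => rfl
    | cons h _ ih => exact (hc _ _ h).trans ih
  exact ⟨ConnectedComponent.lift c fun u v w _ => walk_const u v w, rfl⟩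

noncomputable def componentMulLeft (K : Type*) [Field K] :
    (Γ.ConnectedComponent → K) →ₗ[K] Module.End K (V → K) :=
  (Algebra.lmul K (V → K)).toLinearMap ∘ₗ LinearMap.funLeft K K Γ.connectedComponentMk

theorem componentMulLeft_apply (K : Type*) [Field K] (d : Γ.ConnectedComponent → K) :
    Γ.componentMulLeft K d = LinearMap.mulLeft K (d ∘ Γ.connectedComponentMk) :=
  rfl

theorem componentMulLeft_injective (K : Type*) [Field K] :
    Function.Injective (Γ.componentMulLeft K) :=
  Algebra.lmul_injective.comp <|
    LinearMap.funLeft_injective_of_surjective K K _ Quot.mk_surjective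

end SimpleGraph

section MulLeft

variable {ι R : Type*} [CommRing R] [NoZeroDivisors R] [DecidableEq ι]

theorem apply_single_apply_eq_zero_of_comp_mulLeft {f : Module.End R (ι → R)} {d : ι → R}
    (hf : f ∘ₗ LinearMap.mulLeft R d = LinearMap.mulLeft R d ∘ₗ f) {i j : ι} (hij : d i ≠ d j) :
    f (Pi.single i 1) j = 0 := by
  have h := congrFun (LinearMap.congr_fun hf (Pi.single i 1)) j
  have hmul : d * Pi.single i 1 = d i • Pi.single i (1 : R) := by
    funext k
    by_cases hk : k = i
    · subst hk; simp
    · simp [hk]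
  simp only [LinearMap.comp_apply, LinearMap.mulLeft_apply, hmul, map_smul, Pi.smul_apply,
    Pi.mul_apply, smul_eq_mul] at h
  exact (mul_eq_mul_right_iff.1 h).resolve_left hij

theorem eq_mulLeft_of_forall_comp_mulLeft [Finite ι] {κ : Type*} {f : Module.End R (ι → R)}
    {d : κ → ι → R} (hd : ∀ i j, i ≠ j → ∃ k, d k i ≠ d k j)
    (hf : ∀ k, f ∘ₗ LinearMap.mulLeft R (d k) = LinearMap.mulLeft R (d k) ∘ₗ f) :
    f = LinearMap.mulLeft R (fun i => f (Pi.single i 1) i) := by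
  refine LinearMap.pi_ext' fun i => LinearMap.ext_ring <| funext fun j => ?_
  by_cases hji : j = i
  · subst hji; simp
  · obtain ⟨k, hk⟩ := hd i j (Ne.symm hji)
    simp [apply_single_apply_eq_zero_of_comp_mulLeft (hf k) hk, hji]

end MulLeft

section McKay

variable {G : Type*} [CommGroup G] {n : ℕ} (χ : Fin n → (G →* ℂˣ)) (p : (G →* ℂˣ) → Fin n → ℂ)

theorem Dop_eq_mulLeft (g : G) : Dop g = LinearMap.mulLeft ℂ (fun ρ : G →* ℂˣ => (ρ g : ℂ)) :=
  rfl

theorem mulLeft_comp_Xop_eq_iff (c : (G →* ℂˣ) → ℂ) (j : Fin n) :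
    LinearMap.mulLeft ℂ c ∘ₗ Xop χ p j = Xop χ p j ∘ₗ LinearMap.mulLeft ℂ c ↔
      ∀ ρ, p ρ j ≠ 0 → c ρ = c (ρ * χ j) := by
  constructor
  · intro h ρ hρ
    have h₁ := congrFun (LinearMap.congr_fun h 1) (ρ * χ j)
    simp only [LinearMap.comp_apply, LinearMap.mulLeft_apply, Xop, LinearMap.coe_mk,
      AddHom.coe_mk, Pi.mul_apply, Pi.one_apply, mul_one, mul_inv_cancel_right ρ (χ j)] at h₁
    exact mul_left_cancel₀ hρ (h₁.symm.trans (mul_comm _ _))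
  · intro h
    ext v σ
    obtain ⟨ρ, rfl⟩ : ∃ ρ, σ = ρ * χ j := ⟨σ * (χ j)⁻¹, (inv_mul_cancel_right σ (χ j)).symm⟩
    simp only [LinearMap.comp_apply, LinearMap.mulLeft_apply, Xop, LinearMap.coe_mk,
      AddHom.coe_mk, Pi.mul_apply, mul_inv_cancel_right ρ (χ j)]
    by_cases hρ : p ρ j = 0
    · simp [hρ]
    · rw [← h ρ hρ]; ring

theorem mulLeft_mem_commutant_iff (c : (G →* ℂˣ) → ℂ) :
    LinearMap.mulLeft ℂ c ∈ commutant χ p ↔ ∀ ρ j, p ρ j ≠ 0 → c ρ = c (ρ * χ j) := by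
  have commute_Dop (g : G) : LinearMap.mulLeft ℂ c ∘ₗ Dop g = Dop g ∘ₗ LinearMap.mulLeft ℂ c := by
    ext v : 1
    simp only [Dop_eq_mulLeft, LinearMap.comp_apply, LinearMap.mulLeft_apply, mul_left_comm]
  change (∀ j, _) ∧ (∀ g, _) ↔ _
  simp only [mulLeft_comp_Xop_eq_iff, commute_Dop, implies_true, and_true]
  exact forall_comm

theorem MonoidHom.exists_units_val_apply_ne {ρ σ : G →* ℂˣ} (h : ρ ≠ σ) :
    ∃ g, (ρ g : ℂ) ≠ σ g := by
  by_contra! h'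
  exact h (MonoidHom.ext fun g => Units.ext (h' g))

theorem eq_mulLeft_of_mem_commutant [Finite G] [DecidableEq (G →* ℂˣ)]
    {f : Module.End ℂ ((G →* ℂˣ) → ℂ)} (hf : f ∈ commutant χ p) :
    f = LinearMap.mulLeft ℂ (fun ρ => f (Pi.single ρ 1) ρ) :=
  eq_mulLeft_of_forall_comp_mulLeft (d := fun g ρ => (ρ g : ℂ))
    (fun _ _ h => MonoidHom.exists_units_val_apply_ne h) hf.2

theorem forall_supportGraph_adj_imp_eq_iff {β : Type*} (c : (G →* ℂˣ) → β) :
    (∀ ρ σ, (supportGraph χ p).Adj ρ σ → c ρ = c σ) ↔ ∀ ρ j, p ρ j ≠ 0 → c ρ = c (ρ * χ j) := by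
  constructor
  · intro h ρ j hρ
    by_cases hne : ρ = ρ * χ j
    · rw [← hne]
    · exact h _ _ ⟨hne, .inl ⟨j, hρ, rfl⟩⟩
  · rintro h ρ σ ⟨-, ⟨j, hρ, rfl⟩ | ⟨j, hσ, rfl⟩⟩
    · exact h ρ j hρ
    · exact (h σ j hσ).symm

theorem range_componentMulLeft_supportGraph [Finite G] :
    LinearMap.range ((supportGraph χ p).componentMulLeft ℂ) = commutant χ p := by
  classical
  ext f
  constructor
  · rintro ⟨d, rfl⟩
    rw [componentMulLeft_apply, mulLeft_mem_commutant_iff, ← forall_supportGraph_adj_imp_eq_iff]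
    exact fun ρ σ h => congrArg d (ConnectedComponent.connectedComponentMk_eq_of_adj h)
  · intro hf
    obtain ⟨c, rfl⟩ : ∃ c, f = LinearMap.mulLeft ℂ c := ⟨_, eq_mulLeft_of_mem_commutant χ p hf⟩
    rw [mulLeft_mem_commutant_iff, ← forall_supportGraph_adj_imp_eq_iff] at hf
    obtain ⟨d, hd⟩ := (supportGraph χ p).exists_comp_connectedComponentMk_of_adj hf
    exact ⟨d, by rw [componentMulLeft_apply, hd]⟩

end McKay

theorem stmt5_general {G : Type*} [CommGroup G] [Fintype G] {n : ℕ}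
    (χ : Fin n → (G →* ℂˣ))
    (p : (G →* ℂˣ) → Fin n → ℂ) :
    Module.finrank ℂ (commutant χ p) =
      Nat.card (supportGraph χ p).ConnectedComponent := by
  rw [← range_componentMulLeft_supportGraph,
    LinearMap.finrank_range_of_inj (componentMulLeft_injective _ ℂ),
    Module.finrank_eq_nat_card_basis (Pi.basisFun ℂ _)]

/-- The dimension of the commutant of a McKay-quiver point equals the number of
connected components of its support graph. -/
theorem stmt5 {G : Type*} [CommGroup G] [Fintype G] {n : ℕ} (hn : 1 ≤ n)
    (χ : Fin n → (G →* ℂˣ))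
    (p : (G →* ℂˣ) → Fin n → ℂ) (hp : IsMcKayPt χ p) :
    Module.finrank ℂ (commutant χ p) =
      Nat.card (supportGraph χ p).ConnectedComponent :=
  stmt5_general χ p
end

section
/- Let p and q be McKay-quiver points, with associated operators X_j^{(p)} and X_j^{(q)} on ℂ^Ĝ. There exists a ℂ-linear automorphism f of ℂ^Ĝ satisfying f ∘ X_j^{(p)} = X_j^{(q)} ∘ f for all j ∈ {1,…,n} and commuting with the G-action, if and only if there exists t ∈ T with q = t·p, i.e. q(ρ, j) = t(ρ)^{-1}·t(ρ·χ_j)·p(ρ, j) for all ρ ∈ Ĝ and all j. -/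
section McKay

variable {G : Type*} [CommGroup G] {n : ℕ}

/-- `t • p` in the notation of the paper, for `t ∈ T`. -/
noncomputable def torusAct (χ : Fin n → (G →* ℂˣ)) (t : (G →* ℂˣ) → ℂˣ)
    (p : (G →* ℂˣ) → Fin n → ℂ) : (G →* ℂˣ) → Fin n → ℂ :=
  fun ρ j => ((t ρ : ℂ))⁻¹ * (t (ρ * χ j) : ℂ) * p ρ j

section Single

variable [DecidableEq (G →* ℂˣ)]

lemma Dop_single (g : G) (ρ : G →* ℂˣ) (a : ℂ) :
    Dop g (Pi.single ρ a) = (ρ g : ℂ) • Pi.single ρ a := by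
  funext σ
  by_cases h : σ = ρ
  · subst h; simp [Dop]
  · simp [Dop, h]

lemma Xop_single (χ : Fin n → (G →* ℂˣ)) (p : (G →* ℂˣ) → Fin n → ℂ) (j : Fin n)
    (ρ : G →* ℂˣ) (a : ℂ) :
    Xop χ p j (Pi.single ρ a) = Pi.single (ρ * χ j) (p ρ j * a) := by
  funext σ
  obtain ⟨τ, rfl⟩ : ∃ τ, σ = τ * χ j := ⟨σ * (χ j)⁻¹, (inv_mul_cancel_right σ (χ j)).symm⟩
  have hτ : τ * χ j * (χ j)⁻¹ = τ := mul_inv_cancel_right τ (χ j)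
  by_cases h : τ = ρ
  · subst h; simp [Xop, hτ]
  · simp [Xop, hτ, h]

lemma apply_single_eq_single_of_commute_Dop {F : Type*}
    [FunLike F ((G →* ℂˣ) → ℂ) ((G →* ℂˣ) → ℂ)] [LinearMapClass F ℂ ((G →* ℂˣ) → ℂ) ((G →* ℂˣ) → ℂ)]
    {f : F}
    (hf : ∀ (g : G) (v : (G →* ℂˣ) → ℂ), f (Dop g v) = Dop g (f v)) (ρ : G →* ℂˣ) (a : ℂ) :
    f (Pi.single ρ a) = Pi.single ρ (f (Pi.single ρ a) ρ) := by
  funext σ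
  by_cases hσ : σ = ρ
  · subst hσ; simp
  rw [Pi.single_eq_of_ne hσ]
  obtain ⟨g, hg⟩ : ∃ g, (σ g : ℂ) ≠ ρ g := by
    by_contra! h
    exact hσ (MonoidHom.ext fun g => Units.ext (h g))
  have hfg := congrFun (hf g (Pi.single ρ a)) σ
  rw [Dop_single, map_smul] at hfg
  simp only [Dop, LinearMap.coe_mk, AddHom.coe_mk, Pi.smul_apply, smul_eq_mul] at hfg
  have : ((σ g : ℂ) - ρ g) * f (Pi.single ρ a) σ = 0 := by linear_combination -hfg
  exact (mul_eq_zero.mp this).resolve_left (sub_ne_zero.mpr hg)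

end Single

theorem exists_eq_torusAct_of_intertwining (χ : Fin n → (G →* ℂˣ)) (p q : (G →* ℂˣ) → Fin n → ℂ)
    (f : ((G →* ℂˣ) → ℂ) ≃ₗ[ℂ] ((G →* ℂˣ) → ℂ))
    (hX : ∀ (j : Fin n) (v : (G →* ℂˣ) → ℂ), f (Xop χ p j v) = Xop χ q j (f v))
    (hD : ∀ (g : G) (v : (G →* ℂˣ) → ℂ), f (Dop g v) = Dop g (f v)) :
    ∃ t : (G →* ℂˣ) → ℂˣ, q = torusAct χ t p := by
  classical
  set c : (G →* ℂˣ) → ℂ := fun ρ => f (Pi.single ρ 1) ρ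
  have hfc : ∀ ρ a, f (Pi.single ρ a) = Pi.single ρ (a * c ρ) := by
    intro ρ a
    rw [show Pi.single ρ a = a • Pi.single ρ (1 : ℂ) by simp [← Pi.single_smul], map_smul,
      apply_single_eq_single_of_commute_Dop hD, ← Pi.single_smul, smul_eq_mul]
  have hc : ∀ ρ, c ρ ≠ 0 := fun ρ hρ => by
    have : f (Pi.single ρ 1) = f 0 := by rw [hfc, hρ, mul_zero, Pi.single_zero, map_zero]
    simpa using f.injective this
  refine ⟨fun ρ => Units.mk0 (c ρ) (hc ρ), funext₂ fun ρ j => ?_⟩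
  have key := congrFun (hX j (Pi.single ρ 1)) (ρ * χ j)
  rw [Xop_single, hfc, hfc, Xop_single] at key
  simp only [Pi.single_eq_same, mul_one, one_mul] at key
  simp only [torusAct, Units.val_mk0]
  field_simp [hc ρ]
  linear_combination -key

def torusEquiv (t : (G →* ℂˣ) → ℂˣ) : ((G →* ℂˣ) → ℂ) ≃ₗ[ℂ] ((G →* ℂˣ) → ℂ) :=
  LinearEquiv.piCongrRight fun ρ => LinearEquiv.smulOfUnit (t ρ)

@[simp]
lemma torusEquiv_apply (t : (G →* ℂˣ) → ℂˣ) (v : (G →* ℂˣ) → ℂ) (ρ : G →* ℂˣ) :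
    torusEquiv t v ρ = t ρ * v ρ :=
  rfl

lemma torusEquiv_Xop (χ : Fin n → (G →* ℂˣ)) (p : (G →* ℂˣ) → Fin n → ℂ)
    (t : (G →* ℂˣ) → ℂˣ) (j : Fin n) (v : (G →* ℂˣ) → ℂ) :
    torusEquiv t (Xop χ p j v) = Xop χ (torusAct χ t p) j (torusEquiv t v) := by
  funext σ
  have hσ : σ * (χ j)⁻¹ * χ j = σ := inv_mul_cancel_right σ (χ j)
  simp [Xop, torusAct, hσ]
  field_simp

lemma torusEquiv_Dop (t : (G →* ℂˣ) → ℂˣ) (g : G) (v : (G →* ℂˣ) → ℂ) :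
    torusEquiv t (Dop g v) = Dop g (torusEquiv t v) := by
  funext ρ
  simp only [torusEquiv_apply, Dop, LinearMap.coe_mk, AddHom.coe_mk]
  ring

end McKay

theorem stmt8_general {G : Type*} [CommGroup G] {n : ℕ}
    (χ : Fin n → (G →* ℂˣ))
    (p q : (G →* ℂˣ) → Fin n → ℂ) :
    (∃ f : ((G →* ℂˣ) → ℂ) ≃ₗ[ℂ] ((G →* ℂˣ) → ℂ),
        (∀ (j : Fin n) (v : (G →* ℂˣ) → ℂ), f (Xop χ p j v) = Xop χ q j (f v)) ∧
        (∀ (g : G) (v : (G →* ℂˣ) → ℂ), f (Dop g v) = Dop g (f v))) ↔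
    (∃ t : (G →* ℂˣ) → ℂˣ, ∀ (ρ : G →* ℂˣ) (j : Fin n),
        q ρ j = ((t ρ : ℂ))⁻¹ * (t (ρ * χ j) : ℂ) * p ρ j) := by
  constructor
  · rintro ⟨f, hX, hD⟩
    obtain ⟨t, rfl⟩ := exists_eq_torusAct_of_intertwining χ p q f hX hD
    exact ⟨t, fun ρ j => rfl⟩
  · rintro ⟨t, ht⟩
    obtain rfl : q = torusAct χ t p := funext₂ ht
    exact ⟨torusEquiv t, torusEquiv_Xop χ p t, torusEquiv_Dop t⟩

/-- Two McKay-quiver points are intertwined by a `G`-equivariant linear automorphism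
of `ℂ^Ĝ` iff they lie in the same `T`-orbit. -/
theorem stmt8 {G : Type*} [CommGroup G] [Fintype G] {n : ℕ} (hn : 1 ≤ n)
    (χ : Fin n → (G →* ℂˣ))
    (p q : (G →* ℂˣ) → Fin n → ℂ)
    (hp : IsMcKayPt χ p) (hq : IsMcKayPt χ q) :
    (∃ f : ((G →* ℂˣ) → ℂ) ≃ₗ[ℂ] ((G →* ℂˣ) → ℂ),
        (∀ (j : Fin n) (v : (G →* ℂˣ) → ℂ), f (Xop χ p j v) = Xop χ q j (f v)) ∧
        (∀ (g : G) (v : (G →* ℂˣ) → ℂ), f (Dop g v) = Dop g (f v))) ↔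
    (∃ t : (G →* ℂˣ) → ℂˣ, ∀ (ρ : G →* ℂˣ) (j : Fin n),
        q ρ j = ((t ρ : ℂ))⁻¹ * (t (ρ * χ j) : ℂ) * p ρ j) :=
  stmt8_general χ p q
end

section
/- Let p be a McKay-quiver point and let Stab(p) = {t ∈ T : t·p = p} be its stabilizer. Then Stab(p) contains the subgroup Δ of constant functions, and the quotient group Stab(p)/Δ is finite if and only if p is indecomposable (i.e. there is no nonempty proper subset S ⊆ Ĝ such that both S and its complement Ĝ∖S are p-closed). -/
/-- The action of `T = (ℂˣ)^Ĝ` on McKay-quiver points: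
`(t·p)(ρ, j) = t(ρ)⁻¹ · t(ρ·χ_j) · p(ρ, j)`. -/
noncomputable def Tact {G : Type*} [CommGroup G] {n : ℕ} (χ : Fin n → (G →* ℂˣ))
    (t : (G →* ℂˣ) → ℂˣ) (p : (G →* ℂˣ) → Fin n → ℂ) :
    (G →* ℂˣ) → Fin n → ℂ :=
  fun ρ j => ((t ρ : ℂ))⁻¹ * (t (ρ * χ j) : ℂ) * p ρ j

/-- The stabilizer `Stab(p) = {t ∈ T : t·p = p}` as a subgroup of `T`. -/
noncomputable def stab {G : Type*} [CommGroup G] {n : ℕ} (χ : Fin n → (G →* ℂˣ))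
    (p : (G →* ℂˣ) → Fin n → ℂ) : Subgroup ((G →* ℂˣ) → ℂˣ) where
  carrier := {t | Tact χ t p = p}
  one_mem' := by
    funext ρ j
    simp [Tact]
  mul_mem' := by
    intro s t hs ht
    funext ρ j
    have hs' := congrFun (congrFun hs ρ) j
    have ht' := congrFun (congrFun ht ρ) j
    simp only [Tact, Pi.mul_apply, Units.val_mul] at *
    have e1 : ((s ρ : ℂ) * (t ρ : ℂ))⁻¹ * ((s (ρ * χ j) : ℂ) * (t (ρ * χ j) : ℂ)) * p ρ j
        = (s ρ : ℂ)⁻¹ * (s (ρ * χ j) : ℂ) * ((t ρ : ℂ)⁻¹ * (t (ρ * χ j) : ℂ) * p ρ j) := by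
      rw [mul_inv]; ring
    rw [e1, ht', hs']
  inv_mem' := by
    intro t ht
    funext ρ j
    have ht' := congrFun (congrFun ht ρ) j
    simp only [Tact, Pi.inv_apply, Units.val_inv_eq_inv_val] at *
    have h1 : (t ρ : ℂ) ≠ 0 := Units.ne_zero _
    have h2 : (t (ρ * χ j) : ℂ) ≠ 0 := Units.ne_zero _
    field_simp at ht' ⊢
    first | linear_combination -ht' | linear_combination ht'

/-- The subgroup `Δ ⊆ T` of constant functions. -/
noncomputable def Delta (G : Type*) [CommGroup G] : Subgroup ((G →* ℂˣ) → ℂˣ) where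
  carrier := {t | ∃ c : ℂˣ, t = fun _ => c}
  one_mem' := ⟨1, rfl⟩
  mul_mem' := by
    rintro s t ⟨c, rfl⟩ ⟨c', rfl⟩
    exact ⟨c * c', rfl⟩
  inv_mem' := by
    rintro t ⟨c, rfl⟩
    exact ⟨c⁻¹, rfl⟩


/-!
An element `t` of the torus fixes `p` exactly when `t` is constant along every arrow `ρ → ρ·χ_j`
with `p(ρ, j) ≠ 0`. Hence the level sets of a stabilizing `t` are `p`-closed together with their
complements, so for indecomposable `p` every such `t` is constant and `Stab(p) = Δ`. Conversely, a
decomposition `Ĝ = S ⊔ Sᶜ` yields the stabilizing elements `c` on `S`, `1` on `Sᶜ`, which are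
pairwise distinct modulo `Δ` as `c` runs through the infinite group `ℂˣ`.
-/

instance Units.infinite_of_groupWithZero {G₀ : Type*} [GroupWithZero G₀] [Infinite G₀] :
    Infinite G₀ˣ :=
  unitsEquivNeZero.infinite_iff.mpr (Set.finite_singleton (0 : G₀)).infinite_compl.to_subtype

section Stabilizer

variable {G : Type*} [CommGroup G] {n : ℕ} (χ : Fin n → (G →* ℂˣ)) (p : (G →* ℂˣ) → Fin n → ℂ)

lemma mem_stab_iff {t : (G →* ℂˣ) → ℂˣ} :
    t ∈ stab χ p ↔ ∀ (ρ : G →* ℂˣ) (j : Fin n), p ρ j ≠ 0 → t (ρ * χ j) = t ρ := by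
  change Tact χ t p = p ↔ _
  simp only [funext_iff, Tact]
  refine forall_congr' fun ρ => forall_congr' fun j => ?_
  have ht : (t ρ : ℂ) ≠ 0 := (t ρ).ne_zero
  constructor
  · intro h hp
    have h' : (t ρ : ℂ)⁻¹ * t (ρ * χ j) = 1 := mul_right_cancel₀ hp (by rw [h, one_mul])
    exact Units.ext ((inv_mul_eq_one₀ ht).mp h').symm
  · intro h
    by_cases hp : p ρ j = 0
    · simp [hp]
    · rw [h hp, inv_mul_cancel₀ ht, one_mul]

lemma delta_le_stab : Delta G ≤ stab χ p := by
  rintro t ⟨c, rfl⟩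
  exact (mem_stab_iff χ p).mpr fun _ _ _ => rfl

lemma pClosed_preimage_of_mem_stab {t : (G →* ℂˣ) → ℂˣ} (ht : t ∈ stab χ p) (A : Set ℂˣ) :
    PClosed χ p (t ⁻¹' A) := by
  intro ρ hρ j hj
  rwa [Set.mem_preimage, (mem_stab_iff χ p).mp ht ρ j hj]

lemma stab_le_delta_of_indecomposable
    (hind : ¬ ∃ S : Set (G →* ℂˣ), S.Nonempty ∧ S ≠ Set.univ ∧
      PClosed χ p S ∧ PClosed χ p Sᶜ) :
    stab χ p ≤ Delta G := by
  intro t ht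
  have hS : t ⁻¹' {t 1} = Set.univ := by
    by_contra hne
    exact hind ⟨t ⁻¹' {t 1}, ⟨1, rfl⟩, hne, pClosed_preimage_of_mem_stab χ p ht _,
      pClosed_preimage_of_mem_stab χ p ht {t 1}ᶜ⟩
  exact ⟨t 1, funext fun ρ => Set.eq_univ_iff_forall.mp hS ρ⟩

open Classical in
lemma piecewise_mem_stab {S : Set (G →* ℂˣ)} (hS : PClosed χ p S) (hSc : PClosed χ p Sᶜ)
    (c : ℂˣ) : S.piecewise (fun _ => c) 1 ∈ stab χ p := by
  refine (mem_stab_iff χ p).mpr fun ρ j hj => ?_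
  by_cases hρ : ρ ∈ S
  · simp [hρ, hS ρ hρ j hj]
  · simp [hρ, show ρ * χ j ∉ S from hSc ρ hρ j hj]

lemma infinite_stab_quotient_of_decomposable {S : Set (G →* ℂˣ)} (hne : S.Nonempty)
    (hnu : S ≠ Set.univ) (hS : PClosed χ p S) (hSc : PClosed χ p Sᶜ) :
    Infinite (stab χ p ⧸ (Delta G).subgroupOf (stab χ p)) := by
  classical
  obtain ⟨ρ₀, hρ₀⟩ := hne
  obtain ⟨ρ₁, hρ₁⟩ := Set.ne_univ_iff_exists_notMem S |>.mp hnu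
  refine Infinite.of_injective
    (fun c : ℂˣ => (QuotientGroup.mk ⟨_, piecewise_mem_stab χ p hS hSc c⟩ :
      stab χ p ⧸ (Delta G).subgroupOf (stab χ p))) fun c c' h => ?_
  obtain ⟨d, hd⟩ := Subgroup.mem_subgroupOf.mp (QuotientGroup.eq.mp h)
  -- the difference of the two lifts is constant, and it is `1` off `S` but `c⁻¹ * c'` on `S`
  have h₀ := congrFun hd ρ₀
  have h₁ := congrFun hd ρ₁
  simp only [Subgroup.coe_mul, Subgroup.coe_inv, Pi.mul_apply, Pi.inv_apply,
    Set.piecewise_eq_of_mem _ _ _ hρ₀, Set.piecewise_eq_of_notMem _ _ _ hρ₁, Pi.one_apply,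
    inv_one, one_mul] at h₀ h₁
  rw [← h₁] at h₀
  exact inv_mul_eq_one.mp h₀

end Stabilizer

theorem stmt9_general {G : Type*} [CommGroup G] {n : ℕ}
    (χ : Fin n → (G →* ℂˣ))
    (p : (G →* ℂˣ) → Fin n → ℂ) :
    Delta G ≤ stab χ p ∧
    (Finite ((stab χ p) ⧸ ((Delta G).subgroupOf (stab χ p))) ↔
      ¬ ∃ S : Set (G →* ℂˣ), S.Nonempty ∧ S ≠ Set.univ ∧
        PClosed χ p S ∧ PClosed χ p Sᶜ) := by
  refine ⟨delta_le_stab χ p, fun hfin ⟨S, hne, hnu, hS, hSc⟩ => ?_, fun hind => ?_⟩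
  · exact not_finite_iff_infinite.mpr
      (infinite_stab_quotient_of_decomposable χ p hne hnu hS hSc) hfin
  · have htop : (Delta G).subgroupOf (stab χ p) = ⊤ :=
      Subgroup.subgroupOf_eq_top.mpr (stab_le_delta_of_indecomposable χ p hind)
    rw [htop]
    infer_instance

/-- `Stab(p)` contains `Δ`, and `Stab(p)/Δ` is finite iff `p` is indecomposable. -/
theorem stmt9 {G : Type*} [CommGroup G] [Fintype G] {n : ℕ} (hn : 1 ≤ n)
    (χ : Fin n → (G →* ℂˣ))
    (p : (G →* ℂˣ) → Fin n → ℂ) (hp : IsMcKayPt χ p) :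
    Delta G ≤ stab χ p ∧
    (Finite ((stab χ p) ⧸ ((Delta G).subgroupOf (stab χ p))) ↔
      ¬ ∃ S : Set (G →* ℂˣ), S.Nonempty ∧ S ≠ Set.univ ∧
        PClosed χ p S ∧ PClosed χ p Sᶜ) :=
  stmt9_general χ p
end

section
/- Endow the space of all functions Ĝ × {1,…,n} → ℂ with its Euclidean topology. Let p be a McKay-quiver point and suppose a McKay-quiver point q lies in the closure of the orbit T·p but q ∉ T·p. Then q is decomposable: there exists a nonempty proper subset S ⊆ Ĝ such that both S and its complement Ĝ∖S are q-closed. -/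
/-!
If `Tact χ tᵢ p → q` along a filter, then on every arrow `ρ → ρ * χ j` with `q ρ j ≠ 0` the
ratio `tᵢ(ρ)⁻¹ tᵢ(ρ χ_j)` converges in `ℂˣ` (to `q ρ j / p ρ j`). Convergence of the ratios
`tᵢ(a)⁻¹ tᵢ(b)` is an equivalence relation on `Ĝ`, so if `q` is indecomposable, i.e. its support
quiver is connected, all ratios `tᵢ(1)⁻¹ tᵢ(ρ)` converge, say to `s(ρ)`. Since `Tact` only sees
these ratios and is continuous in `t`, `q = Tact χ s p` lies in the orbit.
-/

open Filter Topology

theorem equivalence_exists_tendsto_inv_mul {ι α M : Type*} [Group M] [TopologicalSpace M]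
    [IsTopologicalGroup M] (F : Filter ι) (t : ι → α → M) :
    Equivalence fun a b => ∃ c, Tendsto (fun i => (t i a)⁻¹ * t i b) F (𝓝 c) where
  refl _ := ⟨1, by simpa using tendsto_const_nhds⟩
  symm := fun ⟨c, h⟩ => ⟨c⁻¹, by simpa using h.inv⟩
  trans := fun ⟨c, h⟩ ⟨d, h'⟩ => ⟨c * d, by simpa [mul_assoc] using h.mul h'⟩

section McKay

variable {G : Type*} [CommGroup G] {n : ℕ} (χ : Fin n → (G →* ℂˣ))

def SupportAdj (q : (G →* ℂˣ) → Fin n → ℂ) (ρ ρ' : G →* ℂˣ) : Prop :=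
  ∃ j, q ρ j ≠ 0 ∧ ρ * χ j = ρ'

theorem pClosed_setOf_eqvGen (q : (G →* ℂˣ) → Fin n → ℂ) (ρ₀ : G →* ℂˣ) :
    PClosed χ q {ρ | Relation.EqvGen (SupportAdj χ q) ρ₀ ρ} :=
  fun _ hρ j hj => hρ.trans _ _ _ (.rel _ _ ⟨j, hj, rfl⟩)

theorem pClosed_compl_setOf_eqvGen (q : (G →* ℂˣ) → Fin n → ℂ) (ρ₀ : G →* ℂˣ) :
    PClosed χ q {ρ | Relation.EqvGen (SupportAdj χ q) ρ₀ ρ}ᶜ :=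
  fun _ hρ j hj hmem => hρ (hmem.trans _ _ _ (.symm _ _ (.rel _ _ ⟨j, hj, rfl⟩)))

theorem exists_decomposition_of_not_eqvGen {q : (G →* ℂˣ) → Fin n → ℂ} {ρ₀ ρ : G →* ℂˣ}
    (h : ¬ Relation.EqvGen (SupportAdj χ q) ρ₀ ρ) :
    ∃ S : Set (G →* ℂˣ), S.Nonempty ∧ S ≠ Set.univ ∧ PClosed χ q S ∧ PClosed χ q Sᶜ :=
  ⟨_, ⟨ρ₀, .refl _⟩, fun hS => h (Set.eq_univ_iff_forall.mp hS ρ), pClosed_setOf_eqvGen χ q ρ₀,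
    pClosed_compl_setOf_eqvGen χ q ρ₀⟩

theorem tact_const_mul (a : ℂˣ) (t : (G →* ℂˣ) → ℂˣ) (p : (G →* ℂˣ) → Fin n → ℂ) :
    Tact χ (fun ρ => a * t ρ) p = Tact χ t p := by
  funext ρ j
  simp only [Tact, Units.val_mul, mul_inv_rev]
  field_simp

theorem continuous_tact (p : (G →* ℂˣ) → Fin n → ℂ) : Continuous fun t => Tact χ t p := by
  unfold Tact
  simp only [← Units.val_inv_eq_inv_val]
  fun_prop

variable {ι : Type*} {F : Filter ι} [F.NeBot] {t : ι → (G →* ℂˣ) → ℂˣ}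
  {p q : (G →* ℂˣ) → Fin n → ℂ}

theorem exists_tendsto_inv_mul_of_supportAdj
    (hq : Tendsto (fun i => Tact χ (t i) p) F (𝓝 q)) {ρ ρ' : G →* ℂˣ}
    (hadj : SupportAdj χ q ρ ρ') :
    ∃ c, Tendsto (fun i => (t i ρ)⁻¹ * t i ρ') F (𝓝 c) := by
  obtain ⟨j, hqj, rfl⟩ := hadj
  have hcoord : Tendsto (fun i => ((t i ρ)⁻¹ * t i (ρ * χ j) : ℂˣ) * p ρ j) F (𝓝 (q ρ j)) := by
    simpa [Tact] using tendsto_pi_nhds.mp (tendsto_pi_nhds.mp hq ρ) j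
  have hpj : p ρ j ≠ 0 := by
    intro hp0
    exact hqj (tendsto_nhds_unique hcoord (by simp [hp0]))
  refine ⟨Units.mk0 _ (div_ne_zero hqj hpj), Units.isEmbedding_val₀.tendsto_nhds_iff.mpr ?_⟩
  simpa [Function.comp_def, hpj] using hcoord.div_const (p ρ j)

theorem exists_eq_tact_of_tendsto (hq : Tendsto (fun i => Tact χ (t i) p) F (𝓝 q))
    (hconn : ∀ ρ, Relation.EqvGen (SupportAdj χ q) 1 ρ) : ∃ s, q = Tact χ s p := by
  have hratio ρ : ∃ c, Tendsto (fun i => (t i 1)⁻¹ * t i ρ) F (𝓝 c) :=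
    (equivalence_exists_tendsto_inv_mul F t).eqvGen_iff.mp
      (Relation.EqvGen.mono (fun _ _ => exists_tendsto_inv_mul_of_supportAdj χ hq) _ _ (hconn ρ))
  choose s hs using hratio
  refine ⟨s, tendsto_nhds_unique hq ?_⟩
  have hnorm : Tendsto (fun i ρ => (t i 1)⁻¹ * t i ρ) F (𝓝 s) := tendsto_pi_nhds.mpr hs
  simpa only [Function.comp_def, tact_const_mul] using ((continuous_tact χ p).tendsto s).comp hnorm

end McKay

theorem stmt10_general {G : Type*} [CommGroup G] {n : ℕ}
    (χ : Fin n → (G →* ℂˣ))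
    (p q : (G →* ℂˣ) → Fin n → ℂ)
    (hclos : q ∈ closure {q' : (G →* ℂˣ) → Fin n → ℂ | ∃ t, q' = Tact χ t p})
    (hnot : q ∉ {q' : (G →* ℂˣ) → Fin n → ℂ | ∃ t, q' = Tact χ t p}) :
    ∃ S : Set (G →* ℂˣ), S.Nonempty ∧ S ≠ Set.univ ∧
      PClosed χ q S ∧ PClosed χ q Sᶜ := by
  by_contra hindec
  have hconn ρ : Relation.EqvGen (SupportAdj χ q) 1 ρ := by
    by_contra h
    exact hindec (exists_decomposition_of_not_eqvGen χ h)
  set F := comap (fun t : (G →* ℂˣ) → ℂˣ => Tact χ t p) (𝓝 q)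
  have : F.NeBot := comap_neBot_iff.mpr fun U hU => by
    obtain ⟨_, hU, t, rfl⟩ := mem_closure_iff_nhds.mp hclos U hU
    exact ⟨t, hU⟩
  exact hnot (exists_eq_tact_of_tendsto χ (F := F) (t := id) tendsto_comap hconn)

/-- A McKay-quiver point lying in the closure of the `T`-orbit of `p` but not in the
orbit itself is decomposable. -/
theorem stmt10 {G : Type*} [CommGroup G] [Fintype G] {n : ℕ} (hn : 1 ≤ n)
    (χ : Fin n → (G →* ℂˣ))
    (p q : (G →* ℂˣ) → Fin n → ℂ)
    (hp : IsMcKayPt χ p) (hq : IsMcKayPt χ q)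
    (hclos : q ∈ closure {q' : (G →* ℂˣ) → Fin n → ℂ | ∃ t, q' = Tact χ t p})
    (hnot : q ∉ {q' : (G →* ℂˣ) → Fin n → ℂ | ∃ t, q' = Tact χ t p}) :
    ∃ S : Set (G →* ℂˣ), S.Nonempty ∧ S ≠ Set.univ ∧
      PClosed χ q S ∧ PClosed χ q Sᶜ :=
  stmt10_general χ p q hclos hnot
end

section
/- Fix m ≥ 1, positive integers r_1, …, r_m, and non-negative integers a_{j,k} for 1 ≤ j ≤ n and 1 ≤ k ≤ m. Suppose b : Ĝ × {1,…,m} → ℚ satisfies: for all ρ ∈ Ĝ, all j ∈ {1,…,n} and all k ∈ {1,…,m}, the number b(ρ, k) + a_{j,k}/r_k − b(ρ·χ_j, k) is a non-negative integer. Then for every ρ ∈ Ĝ and every j ∈ {1,…,n}, the numbers c_k := r_k·(b(ρ·χ_j, k) − b(ρ, k)) are integers satisfying c_k ≤ a_{j,k} and c_k ≡ a_{j,k} (mod r_k), and the element x_j·t_1^{c_1}⋯t_m^{c_m} of R = ℂ[x_1, …, x_n, t_1^{±1}, …, t_m^{±1}] lies in the ℂ-subalgebra of R generated by the elements x_{j′}·t_1^{a_{j′,1}}⋯t_m^{a_{j′,m}}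 for 1 ≤ j′ ≤ n together with the elements t_k^{−r_k} for 1 ≤ k ≤ m. -/
/-- The Laurent polynomial algebra `R = ℂ[x_1,…,x_n,t_1^{±1},…,t_m^{±1}]`, as the
monoid algebra of `ℕ^n × ℤ^m` over `ℂ`. -/
abbrev LaurentR (n m : ℕ) := AddMonoidAlgebra ℂ ((Fin n → ℕ) × (Fin m → ℤ))

/-- The monomial `x_j · t_1^{c_1}⋯t_m^{c_m}` in `R`. -/
noncomputable def xtMonomial {n m : ℕ} (j : Fin n) (c : Fin m → ℤ) : LaurentR n m :=
  AddMonoidAlgebra.single (Pi.single j 1, c) (1 : ℂ)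

/-- The monomial `t_1^{c_1}⋯t_m^{c_m}` in `R`. -/
noncomputable def tMonomial {n m : ℕ} (c : Fin m → ℤ) : LaurentR n m :=
  AddMonoidAlgebra.single ((0 : Fin n → ℕ), c) (1 : ℂ)

/-!
Write `z_k := b(ρ,k) + a_{j,k}/r_k − b(ρχ_j,k) ∈ ℕ`. Then `c_k = a_{j,k} − r_k z_k`, which gives
the bound and the congruence at once, and
`x_j t^c = (x_j t^{a_j}) · ∏_k (t_k^{−r_k})^{z_k}` is a product of generators of the Cox ring.
-/

section Monomials

variable {n m : ℕ}

noncomputable def coxRing (r : Fin m → ℕ) (a : Fin n → Fin m → ℕ) : Subalgebra ℂ (LaurentR n m) :=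
  Algebra.adjoin ℂ
    ((Set.range fun j : Fin n => xtMonomial j (fun k => (a j k : ℤ))) ∪
      (Set.range fun k : Fin m => tMonomial (Pi.single k (-(r k : ℤ)))))

lemma xtMonomial_mul_tMonomial (j : Fin n) (c d : Fin m → ℤ) :
    xtMonomial j c * tMonomial d = (xtMonomial j (c + d) : LaurentR n m) := by
  simp [xtMonomial, tMonomial, AddMonoidAlgebra.single_mul_single]

lemma prod_tMonomial_pow {ι : Type*} (s : Finset ι) (d : ι → Fin m → ℤ) (z : ι → ℕ) :
    ∏ i ∈ s, (tMonomial (d i) : LaurentR n m) ^ z i = tMonomial (∑ i ∈ s, z i • d i) := by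
  simp only [tMonomial, AddMonoidAlgebra.single_pow, AddMonoidAlgebra.prod_single, one_pow,
    Finset.prod_const_one, Prod.smul_mk, smul_zero]
  rw [← prod_mk_sum, Finset.sum_const_zero]

lemma xtMonomial_sub_mem_coxRing (r : Fin m → ℕ) (a : Fin n → Fin m → ℕ) (j : Fin n)
    (z : Fin m → ℕ) : xtMonomial j (fun k => (a j k : ℤ) - r k * z k) ∈ coxRing r a := by
  have hexp : (fun k => (a j k : ℤ) - r k * z k) =
      (fun k => (a j k : ℤ)) + ∑ k, z k • Pi.single k (-(r k : ℤ)) := by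
    funext k
    simp only [nsmul_eq_mul, Pi.add_apply, Finset.sum_apply, Pi.mul_apply, Pi.natCast_apply,
      Pi.single_apply, mul_ite, mul_neg, mul_zero, Finset.sum_ite_eq, Finset.mem_univ, ↓reduceIte]
    ring
  rw [hexp, ← xtMonomial_mul_tMonomial, ← prod_tMonomial_pow]
  exact (coxRing r a).mul_mem (Algebra.subset_adjoin (.inl ⟨j, rfl⟩))
    (prod_mem fun k _ => pow_mem (Algebra.subset_adjoin (.inr ⟨k, rfl⟩)) _)

end Monomials

theorem stmt15_general {G : Type*} [CommGroup G] {n : ℕ}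
    (χ : Fin n → (G →* ℂˣ))
    (m : ℕ) (r : Fin m → ℕ) (hr : ∀ k, 0 < r k)
    (a : Fin n → Fin m → ℕ)
    (b : (G →* ℂˣ) → Fin m → ℚ)
    (hb : ∀ (ρ : G →* ℂˣ) (j : Fin n) (k : Fin m), ∃ z : ℕ,
      b ρ k + (a j k : ℚ) / (r k : ℚ) - b (ρ * χ j) k = (z : ℚ)) :
    ∀ (ρ : G →* ℂˣ) (j : Fin n), ∃ c : Fin m → ℤ,
      (∀ k, (c k : ℚ) = (r k : ℚ) * (b (ρ * χ j) k - b ρ k)) ∧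
      (∀ k, c k ≤ (a j k : ℤ)) ∧
      (∀ k, (r k : ℤ) ∣ ((a j k : ℤ) - c k)) ∧
      xtMonomial j c ∈ Algebra.adjoin ℂ
        ((Set.range fun j' : Fin n =>
            xtMonomial j' (fun k => (a j' k : ℤ))) ∪
         (Set.range fun k : Fin m =>
            tMonomial (Pi.single k (-(r k : ℤ))))) := by
  intro ρ j
  choose z hz using hb ρ j
  refine ⟨fun k => a j k - r k * z k, fun k => ?_, fun k => Int.sub_le_self _ (by positivity),
    fun k => ⟨z k, by ring⟩, xtMonomial_sub_mem_coxRing r a j z⟩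
  have hrk : (r k : ℚ) ≠ 0 := by exact_mod_cast (hr k).ne'
  push_cast
  rw [← hz k]
  field_simp
  ring

/-- Given gnat-family coefficients `b`, each quiver coordinate is sent by `φ_𝓕`
to an element of the Cox ring: the exponents `c_k = r_k (b(ρχ_j,k) − b(ρ,k))` are
integers with `c_k ≤ a_{j,k}` and `c_k ≡ a_{j,k} (mod r_k)`, and the monomial
`x_j t^c` lies in the subalgebra generated by the `x_{j'} t^{a_{j'}}` and the
`t_k^{−r_k}`. -/
theorem stmt15 {G : Type*} [CommGroup G] [Fintype G] {n : ℕ} (hn : 1 ≤ n)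
    (χ : Fin n → (G →* ℂˣ))
    (m : ℕ) (hm : 1 ≤ m) (r : Fin m → ℕ) (hr : ∀ k, 0 < r k)
    (a : Fin n → Fin m → ℕ)
    (b : (G →* ℂˣ) → Fin m → ℚ)
    (hb : ∀ (ρ : G →* ℂˣ) (j : Fin n) (k : Fin m), ∃ z : ℕ,
      b ρ k + (a j k : ℚ) / (r k : ℚ) - b (ρ * χ j) k = (z : ℚ)) :
    ∀ (ρ : G →* ℂˣ) (j : Fin n), ∃ c : Fin m → ℤ,
      (∀ k, (c k : ℚ) = (r k : ℚ) * (b (ρ * χ j) k - b ρ k)) ∧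
      (∀ k, c k ≤ (a j k : ℤ)) ∧
      (∀ k, (r k : ℤ) ∣ ((a j k : ℤ) - c k)) ∧
      xtMonomial j c ∈ Algebra.adjoin ℂ
        ((Set.range fun j' : Fin n =>
            xtMonomial j' (fun k => (a j' k : ℤ))) ∪
         (Set.range fun k : Fin m =>
            tMonomial (Pi.single k (-(r k : ℤ))))) :=
  stmt15_general χ m r hr a b hb
end
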